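/- arXiv:math/0411096 — 4 statements merged into one kernel-verified Lean document; each statement's English description precedes it below -/
import Mathlib

section
/- Let G be a group and U a finite-dimensional complex representation of G. If the restriction of U to some subgroup of G of finite index is semisimple, then U is semisimple. -/
/-- A submodule is invariant under a representation. -/
def Representation.IsInvariantSubmodule {k G V : Type*} [CommSemiring k] [Monoid G]
    [AddCommMonoid V] [Module k V] (ρ : Representation k G V) (W : Submodule k V) : Prop :=
  ∀ g : G, ∀ x ∈ W, ρ g x ∈ W

/-- A representation is semisimple: every invariant submodule has an invariant
complement (equivalently, the representation is a direct sum of irreducibles). -/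
def Representation.IsSemisimpleRep {k G V : Type*} [CommSemiring k] [Monoid G]
    [AddCommMonoid V] [Module k V] (ρ : Representation k G V) : Prop :=
  ∀ W : Submodule k V, ρ.IsInvariantSubmodule W →
    ∃ W' : Submodule k V, ρ.IsInvariantSubmodule W' ∧ IsCompl W W'

/-- If the restriction of a finite-dimensional complex representation of `G` to some
subgroup of finite index is semisimple, then the representation itself is semisimple. -/
theorem semisimple_of_res_finiteIndex_semisimple {G V : Type*} [Group G]
    [AddCommGroup V] [Module ℂ V] [FiniteDimensional ℂ V]
    (ρ : Representation ℂ G V) (H : Subgroup G) [H.FiniteIndex]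
    (h : Representation.IsSemisimpleRep (k := ℂ) (G := H) (ρ.comp H.subtype)) :
    ρ.IsSemisimpleRep := by
  intro W hW
  obtain ⟨W', hW', hc⟩ := h W (fun g x hx => hW g x hx)
  haveI : Fintype (G ⧸ H) := Fintype.ofFinite _
  -- the projection onto W along the H-invariant complement W'
  set p : V →ₗ[ℂ] V := W.subtype ∘ₗ W.projectionOnto W' hc with hp
  have hpW : ∀ x ∈ W, p x = x := by
    intro x hx
    have := Submodule.projectionOnto_apply_left hc ⟨x, hx⟩
    simp only [hp, LinearMap.comp_apply, this, Submodule.coe_subtype]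
  have hpW' : ∀ x ∈ W', p x = 0 := by
    intro x hx
    have := Submodule.projectionOnto_apply_of_mem_right hc hx
    simp only [hp, LinearMap.comp_apply, this, Submodule.coe_subtype, ZeroMemClass.coe_zero]
  have hpmem : ∀ x, p x ∈ W := fun x => (W.projectionOnto W' hc x).2
  have hsup : ∀ x : V, ∃ a ∈ W, ∃ b ∈ W', a + b = x := by
    intro x
    have hx : x ∈ W ⊔ W' := by rw [hc.sup_eq_top]; trivial
    exact Submodule.mem_sup.1 hx
  -- p is H-equivariant
  have hpH : ∀ h₀ ∈ H, ∀ x, p (ρ h₀ x) = ρ h₀ (p x) := by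
    intro h₀ hh x
    obtain ⟨a, ha, b, hb, rfl⟩ := hsup x
    have h1 : ρ h₀ a ∈ W := hW h₀ a ha
    have h2 : ρ h₀ b ∈ W' := hW' ⟨h₀, hh⟩ b hb
    have hpab : p (a + b) = a := by rw [map_add, hpW a ha, hpW' b hb, add_zero]
    rw [hpab, map_add (ρ h₀), map_add p, hpW _ h1, hpW' _ h2, add_zero]
  -- the conjugates of p
  set F : G → (V →ₗ[ℂ] V) := fun g => ρ g ∘ₗ p ∘ₗ ρ g⁻¹ with hF
  have hFmul : ∀ (g h₀ : G), h₀ ∈ H → F (g * h₀) = F g := by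
    intro g h₀ hh
    ext x
    show ρ (g * h₀) (p (ρ (g * h₀)⁻¹ x)) = ρ g (p (ρ g⁻¹ x))
    rw [mul_inv_rev, map_mul, map_mul, Module.End.mul_apply, Module.End.mul_apply,
      hpH h₀⁻¹ (H.inv_mem hh), ← Module.End.mul_apply (ρ h₀), ← map_mul, mul_inv_cancel,
      map_one, Module.End.one_apply]
  have hFcoset : ∀ g₁ g₂ : G, (g₁ : G ⧸ H) = g₂ → F g₁ = F g₂ := by
    intro g₁ g₂ hg
    have hmem := QuotientGroup.eq.1 hg
    have hprod : g₁ * (g₁⁻¹ * g₂) = g₂ := by group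
    rw [← hprod, hFmul g₁ _ hmem]
  have hFconj : ∀ s g : G, F (s * g) = ρ s ∘ₗ F g ∘ₗ ρ s⁻¹ := by
    intro s g
    ext x
    simp only [hF, LinearMap.comp_apply, mul_inv_rev, map_mul, Module.End.mul_apply]
  -- the average
  set T : V →ₗ[ℂ] V := ∑ c : G ⧸ H, F (Quotient.out c) with hT
  have hTequiv : ∀ s : G, ∀ x, T (ρ s x) = ρ s (T x) := by
    intro s x
    have key : ∀ c : G ⧸ H, F (Quotient.out (s • c)) (ρ s x) = ρ s (F (Quotient.out c) x) := by
      intro c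
      have h1 : F (Quotient.out (s • c)) = F (s * Quotient.out c) := by
        apply hFcoset
        rw [QuotientGroup.out_eq', ← smul_eq_mul, MulAction.Quotient.mk_smul_out]
      rw [h1, hFconj]
      simp only [LinearMap.comp_apply]
      rw [← Module.End.mul_apply (ρ s⁻¹), ← map_mul, inv_mul_cancel, map_one,
        Module.End.one_apply]
    rw [hT, LinearMap.sum_apply, LinearMap.sum_apply, map_sum]
    exact (Fintype.sum_bijective (fun c : G ⧸ H => s • c) (MulAction.bijective s)
      (fun c => ρ s (F (Quotient.out c) x)) (fun c => F (Quotient.out c) (ρ s x))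
      (fun c => (key c).symm)).symm
  set n : ℂ := (H.index : ℂ) with hn
  have hn0 : n ≠ 0 := by
    simp only [hn, Ne, Nat.cast_eq_zero]
    exact Subgroup.FiniteIndex.index_ne_zero
  set T' : V →ₗ[ℂ] V := n⁻¹ • T with hT'
  have hT'mem : ∀ x, T' x ∈ W := by
    intro x
    refine Submodule.smul_mem _ _ (?_ : T x ∈ W)
    rw [hT, LinearMap.sum_apply]
    refine Submodule.sum_mem _ (fun c _ => ?_)
    simp only [hF, LinearMap.comp_apply]
    exact hW _ _ (hpmem _)
  have hT'W : ∀ x ∈ W, T' x = x := by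
    intro x hx
    have hTx : T x = (Fintype.card (G ⧸ H) : ℂ) • x := by
      rw [hT, LinearMap.sum_apply]
      have heach : ∀ c : G ⧸ H, F (Quotient.out c) x = x := by
        intro c
        set g := Quotient.out c
        simp only [hF, LinearMap.comp_apply]
        rw [hpW _ (hW g⁻¹ x hx), ← Module.End.mul_apply, ← map_mul, mul_inv_cancel,
          map_one, Module.End.one_apply]
      rw [Finset.sum_congr rfl (fun c _ => heach c), Finset.sum_const, Finset.card_univ]
      exact (Nat.cast_smul_eq_nsmul ℂ _ _).symm
    have hcard : (Fintype.card (G ⧸ H) : ℂ) = n := by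
      rw [hn, Subgroup.index_eq_card, Nat.card_eq_fintype_card]
    rw [hT', LinearMap.smul_apply, hTx, hcard, smul_smul, inv_mul_cancel₀ hn0, one_smul]
  have hT'equiv : ∀ s : G, ∀ x, T' (ρ s x) = ρ s (T' x) := by
    intro s x
    rw [hT', LinearMap.smul_apply, LinearMap.smul_apply, hTequiv s x, map_smul]
  -- conclude
  refine ⟨LinearMap.ker (LinearMap.codRestrict W T' hT'mem), ?_, ?_⟩
  · intro g x hx
    rw [LinearMap.mem_ker] at hx ⊢
    ext
    have hx' : T' x = 0 := congrArg Subtype.val hx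
    simp [LinearMap.codRestrict_apply, hT'equiv g x, hx']
  · exact LinearMap.isCompl_of_proj (fun x : W => by
      ext
      simp [LinearMap.codRestrict_apply, hT'W x.1 x.2])
end

section
/- Let C = ⟨c⟩ be an infinite cyclic group, B = ⟨b⟩ a finite cyclic group of order n, and G = B ⋊ C the semidirect product where c⁻¹bc = b^k for some k coprime to n; let s be the multiplicative order of k modulo n. Then every finite-dimensional irreducible complex representation λ of G factors as λ = λ₀ ⊗ φ, where φ is a one-dimensional representation of G and λ₀ is an irreducible representation of G that is trivial on the subgroup generated by c^s. -/
/-- The semidirect product `G = B ⋊ C` where `B = ℤ/nℤ` is generated by `b`, `C = ℤ` is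
generated by `c`, and conjugation satisfies `c⁻¹ * b * c = b ^ k`. -/
def SDGroup (n : ℕ) (k : (ZMod n)ˣ) : Type :=
  SemidirectProduct (Multiplicative (ZMod n)) (Multiplicative ℤ)
    (zpowersHom _ (AddEquiv.toMultiplicative (AddAut.mulLeft k⁻¹)))

instance (n : ℕ) (k : (ZMod n)ˣ) : Group (SDGroup n k) :=
  inferInstanceAs (Group (SemidirectProduct _ _ _))

/-- The generator `b` of the finite cyclic normal subgroup. -/
def SDGroup.b (n : ℕ) (k : (ZMod n)ˣ) : SDGroup n k :=
  SemidirectProduct.inl (Multiplicative.ofAdd (1 : ZMod n))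

/-- The generator `c` of the infinite cyclic subgroup. -/
def SDGroup.c (n : ℕ) (k : (ZMod n)ˣ) : SDGroup n k :=
  SemidirectProduct.inr (Multiplicative.ofAdd (1 : ℤ))

/-- A representation is irreducible. -/
def Representation.IsIrreducibleRep {k G V : Type*} [CommSemiring k] [Monoid G]
    [AddCommMonoid V] [Module k V] (ρ : Representation k G V) : Prop :=
  Nontrivial V ∧ ∀ W : Submodule k V, ρ.IsInvariantSubmodule W → W = ⊥ ∨ W = ⊤

lemma aut_pow_orderOf (n : ℕ) [NeZero n] (k : (ZMod n)ˣ) :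
    ((AddEquiv.toMultiplicative (AddAut.mulLeft k⁻¹) : MulAut (Multiplicative (ZMod n))) ^ (orderOf k))
      = 1 := by
  have h : ∀ (m : ℕ) (x : Multiplicative (ZMod n)),
      ((AddEquiv.toMultiplicative (AddAut.mulLeft k⁻¹) : MulAut (Multiplicative (ZMod n))) ^ m) x
      = Multiplicative.ofAdd (((k⁻¹ ^ m : (ZMod n)ˣ) : ZMod n) * x.toAdd) := by
    intro m
    induction m with
    | zero => intro x; simp
    | succ m ih =>
      intro x
      rw [pow_succ, MulAut.mul_apply, ih]
      have h2 : Multiplicative.toAdd ((AddEquiv.toMultiplicative ((AddAut.mulLeft k)⁻¹ : Multiplicative (AddAut (ZMod n)))) x)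
          = ↑k⁻¹ * Multiplicative.toAdd x := rfl
      simp [h2, pow_succ, mul_assoc]
  ext x
  rw [h]
  have : (k⁻¹ ^ orderOf k : (ZMod n)ˣ) = 1 := by
    rw [inv_pow, pow_orderOf_eq_one, inv_one]
  rw [this]
  simp

lemma cs_central (n : ℕ) [NeZero n] (k : (ZMod n)ˣ) (g : SDGroup n k) :
    SDGroup.c n k ^ orderOf k * g = g * SDGroup.c n k ^ orderOf k := by
  have hc : SDGroup.c n k ^ orderOf k
      = SemidirectProduct.inr (Multiplicative.ofAdd (orderOf k : ℤ)) := by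
    have h1 : SDGroup.c n k ^ orderOf k
        = SemidirectProduct.inr (Multiplicative.ofAdd (1 : ℤ) ^ orderOf k) :=
      (map_pow SemidirectProduct.inr _ _).symm
    rw [h1]
    congr 1
    simp [← ofAdd_nsmul]
  rw [hc]
  rw [← SemidirectProduct.inl_left_mul_inr_right g]
  have haut : (SemidirectProduct.inr (Multiplicative.ofAdd (orderOf k : ℤ)) :
      SDGroup n k) * SemidirectProduct.inl g.left
      = SemidirectProduct.inl g.left * SemidirectProduct.inr (Multiplicative.ofAdd (orderOf k : ℤ)) := by
    have := SemidirectProduct.inl_aut (φ := (zpowersHom _ (AddEquiv.toMultiplicative (AddAut.mulLeft k⁻¹))))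
      (Multiplicative.ofAdd (orderOf k : ℤ)) g.left
    have hφ : (zpowersHom _ (AddEquiv.toMultiplicative (AddAut.mulLeft (k⁻¹ : (ZMod n)ˣ))))
        (Multiplicative.ofAdd (orderOf k : ℤ)) g.left = g.left := by
      rw [zpowersHom_apply]
      have : (Multiplicative.toAdd (Multiplicative.ofAdd (orderOf k : ℤ))) = (orderOf k : ℤ) := rfl
      rw [this, zpow_natCast, aut_pow_orderOf]
      rfl
    rw [hφ] at this
    conv_rhs => rw [this]
    rw [mul_assoc]
    have hcan : (SemidirectProduct.inr ((Multiplicative.ofAdd (orderOf k : ℤ))⁻¹) : SDGroup n k) *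
        SemidirectProduct.inr (Multiplicative.ofAdd (orderOf k : ℤ)) = 1 := by
      rw [← map_mul, inv_mul_cancel, map_one]
    rw [hcan, mul_one]
  have hcomm : ∀ z : Multiplicative ℤ,
      (SemidirectProduct.inr (Multiplicative.ofAdd (orderOf k : ℤ)) : SDGroup n k) * SemidirectProduct.inr z
      = SemidirectProduct.inr z * SemidirectProduct.inr (Multiplicative.ofAdd (orderOf k : ℤ)) := by
    intro z; rw [← map_mul, ← map_mul, mul_comm]
  erw [← mul_assoc, haut, mul_assoc, hcomm, mul_assoc]
  rfl

/-- Every finite-dimensional irreducible complex representation `λ` of `G = B ⋊ C`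
(`B` cyclic of order `n`, `C` infinite cyclic with `c⁻¹ b c = b ^ k`, `s` the order of
`k` mod `n`) factors as `λ = λ₀ ⊗ φ` with `φ` one-dimensional and `λ₀` irreducible and
trivial on the subgroup generated by `c ^ s`. -/
theorem irreducible_rep_of_semidirect_factors (n : ℕ) [NeZero n] (k : (ZMod n)ˣ)
    {V : Type} [AddCommGroup V] [Module ℂ V] [FiniteDimensional ℂ V]
    (lam : Representation ℂ (SDGroup n k) V) (hirr : lam.IsIrreducibleRep) :
    ∃ (χ : SDGroup n k →* ℂˣ) (lam₀ : Representation ℂ (SDGroup n k) V),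
      lam₀.IsIrreducibleRep ∧
      (∀ g ∈ Subgroup.zpowers (SDGroup.c n k ^ orderOf k), lam₀ g = 1) ∧
      ∀ g : SDGroup n k, lam g = (χ g : ℂ) • lam₀ g := by
  obtain ⟨hnt, hinv⟩ := hirr
  haveI : Nontrivial V := hnt
  set s := orderOf k with hs_def
  set cs : SDGroup n k := SDGroup.c n k ^ s with hcs_def
  set T : Module.End ℂ V := lam cs with hT_def
  have hTcomm : ∀ g : SDGroup n k, T * lam g = lam g * T := by
    intro g
    rw [hT_def, ← map_mul, ← map_mul, cs_central]
  obtain ⟨μ, hμ⟩ := Module.End.exists_eigenvalue T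
  have hWinv : lam.IsInvariantSubmodule (T.eigenspace μ) := by
    intro g x hx
    rw [Module.End.mem_eigenspace_iff] at hx ⊢
    have h1 : T (lam g x) = lam g (T x) := by
      have := congrArg (fun f : Module.End ℂ V => f x) (hTcomm g)
      simpa using this
    rw [h1, hx, map_smul]
  have hWtop : T.eigenspace μ = ⊤ := (hinv _ hWinv).resolve_left hμ
  have hT : ∀ x : V, T x = μ • x := by
    intro x
    exact Module.End.mem_eigenspace_iff.mp (hWtop ▸ Submodule.mem_top)
  have hμ0 : μ ≠ 0 := by
    obtain ⟨x, hx⟩ := exists_ne (0 : V)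
    intro h
    have h1 : lam cs⁻¹ (T x) = x := by
      have : lam cs⁻¹ * lam cs = 1 := by rw [← map_mul, inv_mul_cancel, map_one]
      have := congrArg (fun f : Module.End ℂ V => f x) this
      simpa [hT_def] using this
    rw [hT, h, zero_smul, map_zero] at h1
    exact hx h1.symm
  have hspos : 0 < s := orderOf_pos k
  obtain ⟨μ₀, hμ₀⟩ := IsAlgClosed.exists_pow_nat_eq μ hspos
  have hμ₀ne : μ₀ ≠ 0 := by
    intro h
    exact hμ0 (by rw [← hμ₀, h, zero_pow hspos.ne'])
  set u : ℂˣ := Units.mk0 μ₀ hμ₀ne with hu_def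
  set χ : SDGroup n k →* ℂˣ :=
    (zpowersHom ℂˣ u).comp (SemidirectProduct.rightHom) with hχ_def
  have hχcs : ((χ cs : ℂˣ) : ℂ) = μ := by
    have h1 : (SemidirectProduct.rightHom cs : Multiplicative ℤ)
        = Multiplicative.ofAdd (s : ℤ) := by
      have : SemidirectProduct.rightHom cs
          = (SemidirectProduct.rightHom (SDGroup.c n k)) ^ s := map_pow _ _ _
      rw [this]
      simp [SDGroup.c, ← ofAdd_nsmul]
    have h2 : χ cs = u ^ (s : ℤ) := congrArg ((zpowersHom ℂˣ) u) h1
    rw [h2, zpow_natCast]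
    rw [hu_def]
    simp [hμ₀]
  set lam₀ : Representation ℂ (SDGroup n k) V :=
    { toFun := fun g => (((χ g)⁻¹ : ℂˣ) : ℂ) • lam g
      map_one' := by simp
      map_mul' := by
        intro g h
        simp only [map_mul, mul_inv_rev, Units.val_mul]
        rw [smul_mul_smul_comm]
        ring_nf } with hlam₀_def
  have hlam₀app : ∀ g : SDGroup n k, lam₀ g = (((χ g)⁻¹ : ℂˣ) : ℂ) • lam g := fun g => rfl
  have hlam₀cs : lam₀ cs = 1 := by
    rw [hlam₀app]
    have hTeq : lam cs = μ • (1 : Module.End ℂ V) := by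
      ext x; simpa using hT x
    rw [hTeq, smul_smul, Units.val_inv_eq_inv_val, hχcs, inv_mul_cancel₀ hμ0, one_smul]
  have hfactor : ∀ g : SDGroup n k, lam g = (χ g : ℂ) • lam₀ g := by
    intro g
    rw [hlam₀app, smul_smul, ← Units.val_mul, mul_inv_cancel, Units.val_one, one_smul]
  have htriv : ∀ g ∈ Subgroup.zpowers cs, lam₀ g = 1 := by
    intro g hg
    rw [Subgroup.mem_zpowers_iff] at hg
    obtain ⟨m, rfl⟩ := hg
    have hpow : ∀ j : ℕ, lam₀ (cs ^ j) = 1 := by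
      intro j
      rw [map_pow, hlam₀cs, one_pow]
    rcases m with m | m
    · rw [show (Int.ofNat m) = (m : ℤ) from rfl, zpow_natCast]; exact hpow m
    · rw [zpow_negSucc]
      have h1 : lam₀ ((cs ^ (m + 1))⁻¹) * lam₀ (cs ^ (m + 1)) = 1 := by
        rw [← map_mul, inv_mul_cancel, map_one]
      rw [hpow (m + 1), mul_one] at h1
      exact h1
  refine ⟨χ, lam₀, ⟨hnt, ?_⟩, htriv, hfactor⟩
  intro W hW
  apply hinv W
  intro g x hx
  have h2 := hW g x hx
  have h3 : lam g x = (χ g : ℂ) • lam₀ g x := by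
    rw [hfactor g]; rfl
  rw [h3]
  exact W.smul_mem _ h2
end

section
/- Let d₁, …, d_m be pairwise distinct natural numbers. For each i let p_i(X) ∈ C[X] be a monic polynomial all of whose roots are primitive d_i-th roots of unity, and set p(X) = p₁(X)⋯p_m(X). If p(X) has rational coefficients, then each p_i(X) is a power of the d_i-th cyclotomic polynomial Φ_{d_i}(X). -/
open Polynomial

private lemma cyclo_rootMult_one {d : ℕ} (hd : 0 < d) {z : ℂ} (hz : IsPrimitiveRoot z d) :
    rootMultiplicity z (cyclotomic d ℂ) = 1 := by
  haveI : NeZero d := ⟨hd.ne'⟩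
  rw [← Polynomial.count_roots]
  exact Multiset.count_eq_one_of_mem (Polynomial.roots_cyclotomic_nodup)
    ((mem_roots (cyclotomic_ne_zero d ℂ)).mpr (Polynomial.isRoot_cyclotomic_iff.mpr hz))

private lemma key_mult (d : ℕ) (hd : 0 < d) :
    ∀ n (q : Polynomial ℚ), q.natDegree = n → q ≠ 0 → ∀ z w : ℂ, IsPrimitiveRoot z d →
      IsPrimitiveRoot w d →
      rootMultiplicity z (q.map (algebraMap ℚ ℂ)) = rootMultiplicity w (q.map (algebraMap ℚ ℂ)) := by
  intro n
  induction n using Nat.strong_induction_on with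
  | _ n ih =>
    intro q hdeg hq0 z w hz hw
    by_cases hdvd : cyclotomic d ℚ ∣ q
    · obtain ⟨r, rfl⟩ := hdvd
      have hr0 : r ≠ 0 := fun h => hq0 (by simp [h])
      have hΦ0 : cyclotomic d ℚ ≠ 0 := cyclotomic_ne_zero d ℚ
      have hmap : (cyclotomic d ℚ * r).map (algebraMap ℚ ℂ)
          = cyclotomic d ℂ * r.map (algebraMap ℚ ℂ) := by
        rw [Polynomial.map_mul, map_cyclotomic]
      have hne : cyclotomic d ℂ * r.map (algebraMap ℚ ℂ) ≠ 0 :=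
        mul_ne_zero (cyclotomic_ne_zero d ℂ)
          ((Polynomial.map_ne_zero_iff (algebraMap ℚ ℂ).injective).mpr hr0)
      have hlt : r.natDegree < n := by
        subst hdeg
        rw [natDegree_mul hΦ0 hr0, natDegree_cyclotomic]
        have := Nat.totient_pos.mpr hd
        omega
      have := ih r.natDegree hlt r rfl hr0 z w hz hw
      rw [hmap, rootMultiplicity_mul hne, rootMultiplicity_mul hne,
        cyclo_rootMult_one hd hz, cyclo_rootMult_one hd hw, this]
    · have hnr : ∀ u : ℂ, IsPrimitiveRoot u d →
          rootMultiplicity u (q.map (algebraMap ℚ ℂ)) = 0 := by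
        intro u hu
        apply rootMultiplicity_eq_zero
        intro hroot
        apply hdvd
        have haev : (Polynomial.aeval u) q = 0 := by
          rwa [Polynomial.aeval_def, ← Polynomial.eval_map]
        have := minpoly.dvd ℚ u haev
        rwa [Polynomial.cyclotomic_eq_minpoly_rat hu hd]
      rw [hnr z hz, hnr w hw]

/-- If monic polynomials `p i`, each of whose roots are all primitive `d i`-th roots of
unity (with the `d i` pairwise distinct), have a product with rational coefficients, then
each `p i` is a power of the `d i`-th cyclotomic polynomial. -/
theorem cyclotomic_power_factors {m : ℕ} (d : Fin m → ℕ) (hd : ∀ i, 0 < d i)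
    (hdist : Function.Injective d)
    (p : Fin m → Polynomial ℂ) (hmonic : ∀ i, (p i).Monic)
    (hroots : ∀ i, ∀ z : ℂ, (p i).IsRoot z → IsPrimitiveRoot z (d i))
    (hq : ∃ q : Polynomial ℚ, q.map (algebraMap ℚ ℂ) = ∏ i, p i) :
    ∀ i, ∃ e : ℕ, p i = Polynomial.cyclotomic (d i) ℂ ^ e := by
  intro i
  obtain ⟨q, hqmap⟩ := hq
  haveI : NeZero (d i) := ⟨(hd i).ne'⟩
  have hprod_ne : (∏ j, p j) ≠ 0 := (monic_prod_of_monic _ _ fun j _ => hmonic j).ne_zero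
  have hq0 : q ≠ 0 := by
    intro h; apply hprod_ne; rw [← hqmap, h, Polynomial.map_zero]
  -- root multiplicity in the product equals multiplicity in `p i`, for primitive roots
  have hcount : ∀ z : ℂ, IsPrimitiveRoot z (d i) →
      (∏ j, p j).roots.count z = (p i).roots.count z := by
    intro z hz
    rw [Polynomial.roots_prod p Finset.univ hprod_ne, Multiset.count_bind, ← Finset.sum_eq_multiset_sum]
    rw [Finset.sum_eq_single i (fun j _ hj => ?_) (by simp)]
    rw [Multiset.count_eq_zero]
    intro hmem
    have hzj : IsPrimitiveRoot z (d j) :=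
      hroots j z ((mem_roots (hmonic j).ne_zero).mp hmem)
    exact hj (hdist (hzj.eq_orderOf.trans hz.eq_orderOf.symm))
  set ζ : ℂ := Complex.exp (2 * Real.pi * Complex.I / (d i)) with hζdef
  have hζ : IsPrimitiveRoot ζ (d i) := Complex.isPrimitiveRoot_exp (d i) (hd i).ne'
  refine ⟨rootMultiplicity ζ (p i), ?_⟩
  set e := rootMultiplicity ζ (p i) with he
  -- all primitive roots have multiplicity e in p i
  have hmult : ∀ z : ℂ, IsPrimitiveRoot z (d i) → (p i).roots.count z = e := by
    intro z hz
    have h1 := key_mult (d i) (hd i) q.natDegree q rfl hq0 z ζ hz hζ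
    rw [hqmap, ← Polynomial.count_roots, ← Polynomial.count_roots, hcount z hz, hcount ζ hζ] at h1
    rw [h1, Polynomial.count_roots]
  -- roots of p i equal e • roots of cyclotomic
  have hroots_eq : (p i).roots = e • (cyclotomic (d i) ℂ).roots := by
    ext z
    rw [Multiset.count_nsmul]
    by_cases hz : IsPrimitiveRoot z (d i)
    · rw [hmult z hz, Polynomial.count_roots, cyclo_rootMult_one (hd i) hz, mul_one]
    · rw [Multiset.count_eq_zero.mpr, Multiset.count_eq_zero.mpr, mul_zero]
      · intro hmem
        exact hz (Polynomial.isRoot_cyclotomic_iff.mp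
          ((mem_roots (cyclotomic_ne_zero (d i) ℂ)).mp hmem))
      · intro hmem
        exact hz (hroots i z ((mem_roots (hmonic i).ne_zero).mp hmem))
  have h1 := Polynomial.Splits.eq_prod_roots_of_monic
    (IsAlgClosed.splits _) (hmonic i)
  have h2 := Polynomial.Splits.eq_prod_roots_of_monic
    (IsAlgClosed.splits _) ((cyclotomic.monic (d i) ℂ).pow e)
  rw [h1, h2, Polynomial.roots_pow, hroots_eq]
end

section
/- Let K be a non-Archimedean local field of characteristic zero with ring of integers O, and Λ ⊂ (K^×)^r a free discrete subgroup of rank s ≤ r. Then there exist a basis p₁, …, p_s of Λ and indices 1 ≤ n₁ < ⋯ < n_s ≤ r such that, writing p_k = (p_{kj}) with p_{kj} ∈ K^×, the entry p_{i,n_i} is not a unit of O for every i, while p_{l,n_i} is a unit of O whenever l > i. -/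
/-- `t` is a ℤ-basis of the subgroup `Λ` of the abelian group `A`. -/
def IsZBasis {A : Type} [CommGroup A] {s : ℕ} (Λ : Subgroup A) (t : Fin s → A) : Prop :=
  Subgroup.closure (Set.range t) = Λ ∧
    ∀ e : Fin s → ℤ, (∏ i, t i ^ e i) = 1 → e = 0

section Helpers

variable {G : Type} [CommGroup G]

lemma hom_one (f : G → ℤ) (hf : ∀ x y : G, f (x * y) = f x + f y) : f 1 = 0 := by
  have := hf 1 1
  simp only [mul_one] at this
  omega

lemma hom_inv (f : G → ℤ) (hf : ∀ x y : G, f (x * y) = f x + f y) (x : G) :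
    f x⁻¹ = - f x := by
  have := hf x x⁻¹
  rw [mul_inv_cancel, hom_one f hf] at this
  omega

lemma hom_zpow (f : G → ℤ) (hf : ∀ x y : G, f (x * y) = f x + f y) (x : G) (m : ℤ) :
    f (x ^ m) = m * f x := by
  induction m using Int.induction_on with
  | zero => simpa using hom_one f hf
  | succ i ih =>
    rw [zpow_add_one, hf, ih]; ring
  | pred i ih =>
    rw [zpow_sub_one, hf, ih, hom_inv f hf]; ring

lemma hom_prod (f : G → ℤ) (hf : ∀ x y : G, f (x * y) = f x + f y)
    {ι : Type} (S : Finset ι) (g : ι → G) :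
    f (∏ i ∈ S, g i) = ∑ i ∈ S, f (g i) := by
  classical
  induction S using Finset.cons_induction with
  | empty => simpa using hom_one f hf
  | cons a s ha ih => rw [Finset.prod_cons, hf, ih, Finset.sum_cons]

lemma hom_prod_zpow (f : G → ℤ) (hf : ∀ x y : G, f (x * y) = f x + f y)
    {s : ℕ} (t : Fin s → G) (e : Fin s → ℤ) :
    f (∏ i, t i ^ e i) = ∑ i, e i * f (t i) := by
  rw [hom_prod f hf]
  exact Finset.sum_congr rfl fun i _ => hom_zpow f hf (t i) (e i)

lemma prod_zpow_single {s : ℕ} (t : Fin s → G) (i : Fin s) (c : ℤ) :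
    (∏ k, t k ^ (Pi.single i c : Fin s → ℤ) k) = t i ^ c := by
  rw [Finset.prod_eq_single i]
  · simp
  · intro k _ hk; simp [Pi.single_eq_of_ne hk]
  · simp

lemma mem_closure_range_prod {s : ℕ} (t : Fin s → G) {x : G}
    (hx : x ∈ Subgroup.closure (Set.range t)) :
    ∃ e : Fin s → ℤ, x = ∏ i, t i ^ e i := by
  induction hx using Subgroup.closure_induction with
  | mem y hy =>
    obtain ⟨i, rfl⟩ := hy
    exact ⟨Pi.single i 1, by rw [prod_zpow_single]; simp⟩
  | one => exact ⟨0, by simp⟩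
  | mul a b _ _ ha hb =>
    obtain ⟨e, rfl⟩ := ha; obtain ⟨e', rfl⟩ := hb
    exact ⟨e + e', by simp [zpow_add, Finset.prod_mul_distrib]⟩
  | inv a _ ha =>
    obtain ⟨e, rfl⟩ := ha
    exact ⟨-e, by simp [zpow_neg]⟩

lemma IsZBasis.mem {s : ℕ} {Λ : Subgroup G} {t : Fin s → G} (h : IsZBasis Λ t) (i : Fin s) :
    t i ∈ Λ := by
  rw [← h.1]
  exact Subgroup.subset_closure (Set.mem_range_self i)

lemma IsZBasis.comp_perm {s : ℕ} {Λ : Subgroup G} {t : Fin s → G} (h : IsZBasis Λ t)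
    (σ : Equiv.Perm (Fin s)) : IsZBasis Λ (t ∘ σ) := by
  constructor
  · rw [Set.range_comp, σ.surjective.range_eq, Set.image_univ]
    exact h.1
  · intro e he
    have h1 : ∏ i, t i ^ (e (σ.symm i)) = 1 := by
      rw [← Equiv.prod_comp σ (fun i => t i ^ e (σ.symm i))]
      simpa using he
    have h0 := h.2 _ h1
    funext i
    have := congrFun h0 (σ i)
    simpa using this

lemma prod_update_zpow {s : ℕ} (t : Fin s → G) (e : Fin s → ℤ) {j k : Fin s}
    (hjk : j ≠ k) (m : ℤ) :
    (∏ i, (Function.update t j (t j * t k ^ m)) i ^ e i)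
      = (∏ i, t i ^ e i) * t k ^ (m * e j) := by
  classical
  have h1 : ∀ i, (Function.update t j (t j * t k ^ m)) i ^ e i
      = Function.update (fun i => t i ^ e i) j ((t j * t k ^ m) ^ e j) i := by
    intro i
    rcases eq_or_ne i j with rfl | hij
    · simp
    · simp [Function.update_of_ne hij]
  rw [Finset.prod_congr rfl (fun i _ => h1 i),
    Finset.prod_update_of_mem (Finset.mem_univ j),
    ← Finset.mul_prod_erase Finset.univ (fun i => t i ^ e i) (Finset.mem_univ j),
    Finset.erase_eq, mul_zpow, ← zpow_mul]
  rw [mul_assoc, mul_comm (t k ^ (m * e j)), ← mul_assoc]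

lemma prod_zpow_update_exp {s : ℕ} (t : Fin s → G) (e : Fin s → ℤ) (k : Fin s) (d : ℤ) :
    (∏ i, t i ^ (Function.update e k (e k + d)) i) = (∏ i, t i ^ e i) * t k ^ d := by
  classical
  have h1 : ∀ i, t i ^ (Function.update e k (e k + d)) i
      = Function.update (fun i => t i ^ e i) k (t k ^ (e k + d)) i := by
    intro i
    rcases eq_or_ne i k with rfl | hik
    · simp
    · simp [Function.update_of_ne hik]
  rw [Finset.prod_congr rfl (fun i _ => h1 i),
    Finset.prod_update_of_mem (Finset.mem_univ k),
    ← Finset.mul_prod_erase Finset.univ (fun i => t i ^ e i) (Finset.mem_univ k),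
    Finset.erase_eq, zpow_add]
  rw [mul_assoc, mul_comm (t k ^ d), ← mul_assoc]

lemma IsZBasis.update {s : ℕ} {Λ : Subgroup G} {t : Fin s → G} (h : IsZBasis Λ t)
    {j k : Fin s} (hjk : j ≠ k) (m : ℤ) :
    IsZBasis Λ (Function.update t j (t j * t k ^ m)) := by
  classical
  constructor
  · apply le_antisymm
    · rw [Subgroup.closure_le]
      rintro x ⟨i, rfl⟩
      rcases eq_or_ne i j with rfl | hij
      · simp only [Function.update_self, SetLike.mem_coe]
        exact mul_mem (h.mem i) (zpow_mem (h.mem k) m)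
      · rw [Function.update_of_ne hij]
        exact h.mem i
    · rw [← h.1, Subgroup.closure_le]
      rintro x ⟨i, rfl⟩
      simp only [SetLike.mem_coe]
      rcases eq_or_ne i j with rfl | hij
      · have h1 : t i * t k ^ m ∈
            Subgroup.closure (Set.range (Function.update t i (t i * t k ^ m))) :=
          Subgroup.subset_closure ⟨i, Function.update_self _ _ _⟩
        have h2 : t k ∈
            Subgroup.closure (Set.range (Function.update t i (t i * t k ^ m))) :=
          Subgroup.subset_closure ⟨k, Function.update_of_ne hjk.symm _ _⟩
        have h6 := mul_mem h1 (inv_mem (zpow_mem h2 m))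
        rwa [mul_inv_cancel_right] at h6
      · have h5 : t i = (Function.update t j (t j * t k ^ m)) i := by
          rw [Function.update_of_ne hij]
        rw [h5]
        exact Subgroup.subset_closure (Set.mem_range_self i)
  · intro e he
    rw [prod_update_zpow t e hjk m] at he
    have he2 : (∏ i, t i ^ (Function.update e k (e k + m * e j)) i) = 1 := by
      rw [prod_zpow_update_exp]; exact he
    have h0 := h.2 _ he2
    have hj0 : e j = 0 := by
      have h4 := congrFun h0 j
      rw [Function.update_of_ne hjk] at h4
      simpa using h4
    funext i
    rcases eq_or_ne i k with rfl | hik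
    · have h4 := congrFun h0 i
      rw [Function.update_self] at h4
      simp only [Pi.zero_apply] at h4 ⊢
      rw [hj0, mul_zero, add_zero] at h4
      exact h4
    · have h4 := congrFun h0 i
      rwa [Function.update_of_ne hik] at h4


lemma euclid {G : Type} [CommGroup G] {s : ℕ} (f : G → ℤ)
    (hf : ∀ x y : G, f (x * y) = f x + f y) (Λ : Subgroup G) :
    ∀ (N : ℕ) (t : Fin (s + 1) → G), (∑ i, (f (t i)).natAbs ≤ N) → IsZBasis Λ t →
      (∃ i, f (t i) ≠ 0) →
      ∃ t' : Fin (s + 1) → G, IsZBasis Λ t' ∧ f (t' 0) ≠ 0 ∧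
        ∀ i, i ≠ 0 → f (t' i) = 0 := by
  classical
  intro N
  induction N with
  | zero =>
    intro t hsum ht hex
    exfalso
    obtain ⟨i, hi⟩ := hex
    have h0 : ∑ i, (f (t i)).natAbs = 0 := Nat.le_zero.mp hsum
    have := (Finset.sum_eq_zero_iff.mp h0) i (Finset.mem_univ i)
    exact hi (Int.natAbs_eq_zero.mp this)
  | succ N IH =>
    intro t hsum ht hex
    by_cases hpair : ∃ i j : Fin (s + 1), i ≠ j ∧ f (t i) ≠ 0 ∧ f (t j) ≠ 0 ∧
        (f (t i)).natAbs ≤ (f (t j)).natAbs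
    · obtain ⟨i, j, hij, hfi, hfj, hle⟩ := hpair
      set q : ℤ := f (t j) / f (t i) with hq
      set t₁ : Fin (s + 1) → G := Function.update t j (t j * t i ^ (-q)) with ht₁
      have hbasis₁ : IsZBasis Λ t₁ := ht.update hij.symm (-q)
      have hpivot : f (t₁ j) = f (t j) % f (t i) := by
        rw [ht₁, Function.update_self, hf, hom_zpow f hf, Int.emod_def, hq]
        ring
      have hother : ∀ l, l ≠ j → f (t₁ l) = f (t l) := by
        intro l hl
        rw [ht₁, Function.update_of_ne hl]
      have hlt : (f (t₁ j)).natAbs < (f (t j)).natAbs := by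
        rw [hpivot]
        have h1 := Int.emod_nonneg (f (t j)) hfi
        have h2 := Int.emod_lt (f (t j)) hfi
        omega
      have hnewsum : ∑ x, (f (t₁ x)).natAbs ≤ N := by
        have e1 : ∑ x, (f (t₁ x)).natAbs
            = (f (t₁ j)).natAbs + ∑ x ∈ Finset.univ.erase j, (f (t₁ x)).natAbs :=
          (Finset.add_sum_erase _ _ (Finset.mem_univ j)).symm
        have e2 : ∑ x, (f (t x)).natAbs
            = (f (t j)).natAbs + ∑ x ∈ Finset.univ.erase j, (f (t x)).natAbs :=
          (Finset.add_sum_erase _ _ (Finset.mem_univ j)).symm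
        have e3 : ∑ x ∈ Finset.univ.erase j, (f (t₁ x)).natAbs
            = ∑ x ∈ Finset.univ.erase j, (f (t x)).natAbs := by
          refine Finset.sum_congr rfl fun x hx => ?_
          rw [hother x (Finset.mem_erase.mp hx).1]
        rw [e2] at hsum
        rw [e1, e3]
        omega
      refine IH t₁ hnewsum hbasis₁ ⟨i, ?_⟩
      rw [hother i hij]
      exact hfi
    · push_neg at hpair
      obtain ⟨i₀, hi₀⟩ := hex
      have huniq : ∀ i, i ≠ i₀ → f (t i) = 0 := by
        intro i hi
        by_contra hne
        have h1 := hpair i i₀ hi hne hi₀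
        have h2 := hpair i₀ i (Ne.symm hi) hi₀ hne
        omega
      set σ : Equiv.Perm (Fin (s + 1)) := Equiv.swap 0 i₀ with hσ
      refine ⟨t ∘ σ, ht.comp_perm σ, ?_, ?_⟩
      · simpa [hσ, Equiv.swap_apply_left] using hi₀
      · intro i hi
        apply huniq
        intro hcontra
        apply hi
        have : σ (σ i) = σ i₀ := congrArg σ hcontra
        rwa [Equiv.swap_apply_self, hσ, Equiv.swap_apply_right] at this


lemma echelon {G : Type} [CommGroup G] {r : ℕ} (V : G → Fin r → ℤ)
    (hV : ∀ x y : G, V (x * y) = V x + V y) :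
    ∀ (s : ℕ) (Λ : Subgroup G) (t : Fin s → G), IsZBasis Λ t →
      (∀ x ∈ Λ, V x = 0 → x = 1) →
      ∀ c : ℕ, (∀ x ∈ Λ, ∀ j : Fin r, (j : ℕ) < c → V x j = 0) →
      ∃ (t' : Fin s → G) (n : Fin s → Fin r), IsZBasis Λ t' ∧ StrictMono n ∧
        (∀ i, c ≤ (n i : ℕ)) ∧ (∀ i, V (t' i) (n i) ≠ 0) ∧
        ∀ i l, i < l → V (t' l) (n i) = 0 := by
  classical
  intro s
  induction s with
  | zero =>
    intro Λ t ht _ c _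
    exact ⟨t, Fin.elim0, ht, fun a => a.elim0, fun i => i.elim0, fun i => i.elim0,
      fun i => i.elim0⟩
  | succ s IH =>
    intro Λ t ht hdisc c hc
    -- coordinatewise hom property
    have hVj : ∀ j : Fin r, ∀ x y : G, V (x * y) j = V x j + V y j := by
      intro j x y
      have := congrFun (hV x y) j
      simpa using this
    -- t 0 is a nontrivial element of Λ
    have ht0ne : t 0 ≠ 1 := by
      intro h1
      have hp : (∏ i, t i ^ (Pi.single (0 : Fin (s + 1)) (1 : ℤ) : Fin (s + 1) → ℤ) i) = 1 := by
        rw [prod_zpow_single, h1, one_zpow]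
      have h0 := ht.2 _ hp
      have := congrFun h0 0
      simp at this
    have hVt0 : V (t 0) ≠ 0 := by
      intro h0
      exact ht0ne (hdisc (t 0) (ht.mem 0) h0)
    -- the first pivot column
    have hTne : (Finset.univ.filter (fun j : Fin r => ∃ i, V (t i) j ≠ 0)).Nonempty := by
      obtain ⟨j, hj⟩ := Function.ne_iff.mp hVt0
      exact ⟨j, Finset.mem_filter.mpr ⟨Finset.mem_univ j, ⟨0, by simpa using hj⟩⟩⟩
    set T := Finset.univ.filter (fun j : Fin r => ∃ i, V (t i) j ≠ 0) with hT
    set n₀ : Fin r := T.min' hTne with hn₀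
    obtain ⟨i₀, hi₀⟩ : ∃ i, V (t i) n₀ ≠ 0 :=
      (Finset.mem_filter.mp (T.min'_mem hTne)).2
    have hmin : ∀ j : Fin r, j < n₀ → ∀ i, V (t i) j = 0 := by
      intro j hj i
      by_contra hne
      have hjT : j ∈ T := Finset.mem_filter.mpr ⟨Finset.mem_univ j, ⟨i, hne⟩⟩
      exact absurd (T.min'_le j hjT) (not_le.mpr hj)
    have hΛlow : ∀ x ∈ Λ, ∀ j : Fin r, j < n₀ → V x j = 0 := by
      intro x hx j hj
      rw [← ht.1] at hx
      obtain ⟨e, rfl⟩ := mem_closure_range_prod t hx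
      rw [hom_prod_zpow (fun y => V y j) (fun a b => hVj j a b) t e]
      exact Finset.sum_eq_zero fun i _ => by rw [hmin j hj i, mul_zero]
    have hcn₀ : c ≤ (n₀ : ℕ) := by
      by_contra hlt
      exact hi₀ (hc (t i₀) (ht.mem i₀) n₀ (not_le.mp hlt))
    -- apply the Euclidean algorithm at column n₀
    obtain ⟨t'', ht'', hf0, hfsucc⟩ := euclid (fun x => V x n₀) (fun a b => hVj n₀ a b) Λ
      (∑ i, (V (t i) n₀).natAbs) t le_rfl ht ⟨i₀, hi₀⟩
    -- the sublattice generated by the tail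
    set u0 : Fin s → G := fun i => t'' i.succ with hu0
    set Λ' : Subgroup G := Subgroup.closure (Set.range u0) with hΛ'
    have hΛ'le : Λ' ≤ Λ := by
      rw [hΛ', Subgroup.closure_le]
      rintro x ⟨i, rfl⟩
      exact ht''.mem i.succ
    have hu0basis : IsZBasis Λ' u0 := by
      refine ⟨rfl, ?_⟩
      intro e he
      have hp : (∏ i, t'' i ^ (Fin.cons (0 : ℤ) e : Fin (s + 1) → ℤ) i) = 1 := by
        rw [Fin.prod_univ_succ]
        simp only [Fin.cons_zero, Fin.cons_succ, zpow_zero, one_mul]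
        exact he
      have h0 := ht''.2 _ hp
      funext i
      have := congrFun h0 i.succ
      simpa using this
    have hdisc' : ∀ x ∈ Λ', V x = 0 → x = 1 := fun x hx => hdisc x (hΛ'le hx)
    have hΛ'n₀ : ∀ x ∈ Λ', V x n₀ = 0 := by
      intro x hx
      obtain ⟨e, rfl⟩ := mem_closure_range_prod u0 hx
      rw [hom_prod_zpow (fun y => V y n₀) (fun a b => hVj n₀ a b) u0 e]
      refine Finset.sum_eq_zero fun i _ => ?_
      rw [hfsucc i.succ (Fin.succ_ne_zero i), mul_zero]
    have hc' : ∀ x ∈ Λ', ∀ j : Fin r, (j : ℕ) < (n₀ : ℕ) + 1 → V x j = 0 := by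
      intro x hx j hj
      rcases Nat.lt_or_ge (j : ℕ) (n₀ : ℕ) with h | h
      · exact hΛlow x (hΛ'le hx) j h
      · have : j = n₀ := Fin.ext (le_antisymm (Nat.lt_succ_iff.mp hj) h)
        rw [this]
        exact hΛ'n₀ x hx
    obtain ⟨u, n', hu, hn'mono, hn'c, hn'piv, hn'zero⟩ :=
      IH Λ' u0 hu0basis hdisc' ((n₀ : ℕ) + 1) hc'
    have humem : ∀ i, u i ∈ Λ' := hu.mem
    -- assemble the new basis and pivots
    refine ⟨Fin.cons (t'' 0) u, Fin.cons n₀ n', ?_, ?_, ?_, ?_, ?_⟩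
    · constructor
      · apply le_antisymm
        · rw [Subgroup.closure_le]
          rintro x ⟨i, rfl⟩
          simp only [SetLike.mem_coe]
          induction i using Fin.cases with
          | zero => rw [Fin.cons_zero]; exact ht''.mem 0
          | succ i => rw [Fin.cons_succ]; exact hΛ'le (humem i)
        · rw [← ht''.1, Subgroup.closure_le]
          rintro x ⟨i, rfl⟩
          simp only [SetLike.mem_coe]
          induction i using Fin.cases with
          | zero =>
            exact Subgroup.subset_closure ⟨0, Fin.cons_zero _ _⟩
          | succ i =>
            have hle2 : Λ' ≤ Subgroup.closure (Set.range (Fin.cons (t'' 0) u)) := by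
              conv_lhs => rw [← hu.1]
              apply Subgroup.closure_mono
              rintro y ⟨l, rfl⟩
              exact ⟨l.succ, Fin.cons_succ _ _ _⟩
            refine hle2 ?_
            exact Subgroup.subset_closure ⟨i, rfl⟩
      · intro e he
        rw [Fin.prod_univ_succ] at he
        simp only [Fin.cons_zero, Fin.cons_succ] at he
        have hVhe : V (t'' 0 ^ e 0 * ∏ i : Fin s, u i ^ e i.succ) n₀ = 0 := by
          rw [he]
          exact hom_one (fun y => V y n₀) (fun a b => hVj n₀ a b)
        rw [hVj n₀, hom_zpow (fun y => V y n₀) (fun a b => hVj n₀ a b),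
          hom_prod_zpow (fun y => V y n₀) (fun a b => hVj n₀ a b)] at hVhe
        have hsum0 : ∑ i : Fin s, e i.succ * V (u i) n₀ = 0 :=
          Finset.sum_eq_zero fun i _ => by rw [hΛ'n₀ (u i) (humem i), mul_zero]
        rw [hsum0, add_zero] at hVhe
        have he0 : e 0 = 0 := by
          rcases mul_eq_zero.mp hVhe with h | h
          · exact h
          · exact absurd h hf0
        rw [he0, zpow_zero, one_mul] at he
        have htail := hu.2 _ he
        funext i
        induction i using Fin.cases with
        | zero => exact he0
        | succ i => exact congrFun htail i
    · intro a b hab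
      induction b using Fin.cases with
      | zero => exact absurd hab (Fin.not_lt_zero a)
      | succ b =>
        induction a using Fin.cases with
        | zero =>
          simp only [Fin.cons_zero, Fin.cons_succ]
          have := hn'c b
          exact Fin.lt_def.mpr (by omega)
        | succ a =>
          simp only [Fin.cons_succ]
          exact hn'mono (by exact_mod_cast Fin.succ_lt_succ_iff.mp hab)
    · intro i
      induction i using Fin.cases with
      | zero => simpa using hcn₀
      | succ i =>
        simp only [Fin.cons_succ]
        have := hn'c i
        omega
    · intro i
      induction i using Fin.cases with
      | zero => simpa using hf0
      | succ i =>
        simp only [Fin.cons_succ]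
        exact hn'piv i
    · intro i l hil
      induction l using Fin.cases with
      | zero => exact absurd hil (Fin.not_lt_zero i)
      | succ l =>
        induction i using Fin.cases with
        | zero =>
          simp only [Fin.cons_zero, Fin.cons_succ]
          exact hΛ'n₀ (u l) (humem l)
        | succ i =>
          simp only [Fin.cons_succ]
          exact hn'zero i l (by exact_mod_cast Fin.succ_lt_succ_iff.mp hil)

end Helpers

/-- Let `K` be a non-Archimedean local field of characteristic zero (complete, locally
compact, nontrivially ultrametrically normed, with discrete value group generated by a
uniformizer `π`) and `Λ ⊂ (K^×)^r` a free discrete subgroup of rank `s ≤ r` (discreteness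
expressed by `Λ ∩ (O^×)^r = 1`).  Then `Λ` has a basis `t` and there are indices
`n 0 < ⋯ < n (s-1)` such that the entry `t i (n i)` is not a unit of the ring of integers
(its norm is not 1), while `t l (n i)` is a unit (norm 1) whenever `l > i`. -/
theorem local_field_lattice_echelon_basis {K : Type} [NontriviallyNormedField K]
    [CompleteSpace K] [CharZero K] [IsUltrametricDist K] [ProperSpace K]
    (π : K) (hπ0 : 0 < ‖π‖) (hπ1 : ‖π‖ < 1)
    (hval : ∀ x : Kˣ, ∃ m : ℤ, ‖(x : K)‖ = ‖π‖ ^ m)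
    {r s : ℕ} (hsr : s ≤ r) (Λ : Subgroup (Fin r → Kˣ))
    (t₀ : Fin s → (Fin r → Kˣ)) (ht₀ : IsZBasis Λ t₀)
    (hdisc : ∀ x ∈ Λ, (∀ j : Fin r, ‖(x j : K)‖ = 1) → x = 1) :
    ∃ (t : Fin s → (Fin r → Kˣ)) (n : Fin s → Fin r), IsZBasis Λ t ∧ StrictMono n ∧
      (∀ i, ‖(t i (n i) : K)‖ ≠ 1) ∧
      ∀ i l : Fin s, i < l → ‖(t l (n i) : K)‖ = 1 := by
  classical
  have hπne : ‖π‖ ≠ 1 := ne_of_lt hπ1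
  have hinj : Function.Injective (fun m : ℤ => ‖π‖ ^ m) := zpow_right_injective₀ hπ0 hπne
  set v : Kˣ → ℤ := fun x => (hval x).choose with hv
  have hvspec : ∀ x : Kˣ, ‖(x : K)‖ = ‖π‖ ^ v x := fun x => (hval x).choose_spec
  have hvadd : ∀ x y : Kˣ, v (x * y) = v x + v y := by
    intro x y
    apply hinj
    show ‖π‖ ^ v (x * y) = ‖π‖ ^ (v x + v y)
    rw [← hvspec, zpow_add₀ (ne_of_gt hπ0), ← hvspec, ← hvspec, Units.val_mul, norm_mul]
  have hv1 : ∀ x : Kˣ, v x = 0 ↔ ‖(x : K)‖ = 1 := by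
    intro x
    constructor
    · intro h
      rw [hvspec, h, zpow_zero]
    · intro h
      apply hinj
      show ‖π‖ ^ v x = ‖π‖ ^ (0 : ℤ)
      rw [← hvspec, h, zpow_zero]
  set V : (Fin r → Kˣ) → (Fin r → ℤ) := fun x j => v (x j) with hVdef
  have hV : ∀ x y : Fin r → Kˣ, V (x * y) = V x + V y := by
    intro x y
    funext j
    exact hvadd (x j) (y j)
  have hdisc' : ∀ x ∈ Λ, V x = 0 → x = 1 := by
    intro x hx h0
    exact hdisc x hx fun j => (hv1 (x j)).mp (congrFun h0 j)
  obtain ⟨t, n, htb, hmono, _, hpiv, hzero⟩ :=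
    echelon V hV s Λ t₀ ht₀ hdisc' 0 (fun x _ j hj => absurd hj (Nat.not_lt_zero _))
  refine ⟨t, n, htb, hmono, ?_, ?_⟩
  · intro i h1
    exact hpiv i ((hv1 _).mpr h1)
  · intro i l hil
    exact (hv1 _).mp (hzero i l hil)
end
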